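/- Let M > 0 and Λ > 0 with 9ΛM² < 1, write S := √(1 − 9ΛM²), Ω_ph := S/(3√3·M), c_{λ,2} := √3·(45ΛM² − 2)/(243·M³·S), and let N̂(a) := 54M²/S² − (12√3·M·(2 + 9ΛM²)/S³)·a + (18ΛM²·(20 + 9ΛM²)/S⁴)·a² and D̂(a) := 1458M⁴/S⁴ − (324√3·M³·(2 + 9ΛM²)/S⁵)·a + (54M²·(4 + 90ΛM² + 81Λ²M⁴)/S⁶)·a². Then, as a → 0, √(N̂(a)/D̂(a)) − Ω_ph − c_{λ,2}·a² = O(a³). -/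

import Mathlib

open Asymptotics

/-- `S = √(1 - 9ΛM²)`. -/
noncomputable def S (M Λ : ℝ) : ℝ := Real.sqrt (1 - 9 * Λ * M ^ 2)

/-- Second-order expansion of the numerator `R''(r₊(a))`. -/
noncomputable def Nhat (M Λ a : ℝ) : ℝ :=
  54 * M ^ 2 / (S M Λ) ^ 2 -
    (12 * Real.sqrt 3 * M * (2 + 9 * Λ * M ^ 2) / (S M Λ) ^ 3) * a +
    (18 * Λ * M ^ 2 * (20 + 9 * Λ * M ^ 2) / (S M Λ) ^ 4) * a ^ 2

/-- Second-order expansion of the denominator `2r₊(a)⁴·ṫ(r₊(a))²`. -/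
noncomputable def Dhat (M Λ a : ℝ) : ℝ :=
  1458 * M ^ 4 / (S M Λ) ^ 4 -
    (324 * Real.sqrt 3 * M ^ 3 * (2 + 9 * Λ * M ^ 2) / (S M Λ) ^ 5) * a +
    (54 * M ^ 2 * (4 + 90 * Λ * M ^ 2 + 81 * Λ ^ 2 * M ^ 4) / (S M Λ) ^ 6) * a ^ 2

/-!
Write `N̂ = n₀ + n₁a + n₂a²`, `D̂ = d₀ + d₁a + d₂a²` and `p = p₀ + p₂a²` with `p₀ = Ω_ph`,
`p₂ = c_{λ,2}`. Since `|√q - p| ≤ |q - p²| / p` for `p > 0`, it suffices that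
`N̂/D̂ - p² = (N̂ - p²D̂)/D̂ = O(a³)`. The coefficients of `1, a, a²` in `N̂ - p²D̂` are
`n₀ - p₀²d₀`, `n₁ - p₀²d₁` and `n₂ - p₀²d₂ - 2p₀p₂d₀`, and all three vanish by direct computation.
-/

open Filter Topology

theorem Real.abs_sqrt_sub_le {p : ℝ} (hp : 0 < p) (q : ℝ) : |√q - p| ≤ |q - p ^ 2| / p := by
  rw [le_div_iff₀ hp]
  rcases le_or_gt 0 q with hq | hq
  · have hprod : (√q - p) * (√q + p) = q - p ^ 2 := by linear_combination Real.sq_sqrt hq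
    calc |√q - p| * p ≤ |√q - p| * (√q + p) := by
          gcongr; exact le_add_of_nonneg_left (Real.sqrt_nonneg q)
      _ = |q - p ^ 2| := by rw [← hprod, abs_mul, abs_of_nonneg (by positivity : 0 ≤ √q + p)]
  · rw [Real.sqrt_eq_zero_of_nonpos hq.le, zero_sub, abs_neg, abs_of_pos hp,
      abs_of_neg (by nlinarith)]
    nlinarith

theorem Asymptotics.IsBigO.sqrt_sub {α : Type*} {l : Filter α} {q p k : α → ℝ} {p₀ : ℝ}
    (hp : Tendsto p l (𝓝 p₀)) (hp₀ : 0 < p₀) (h : (fun x => q x - p x ^ 2) =O[l] k) :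
    (fun x => √(q x) - p x) =O[l] k := by
  refine IsBigO.trans ?_ h
  refine IsBigO.of_bound (2 / p₀) ?_
  filter_upwards [hp.eventually (lt_mem_nhds (half_lt_self hp₀))] with x hx
  have hpx : 0 < p x := (half_pos hp₀).trans hx
  simp only [Real.norm_eq_abs]
  calc |√(q x) - p x| ≤ |q x - p x ^ 2| / p x := Real.abs_sqrt_sub_le hpx (q x)
    _ ≤ |q x - p x ^ 2| / (p₀ / 2) := by gcongr
    _ = 2 / p₀ * |q x - p x ^ 2| := by ring

theorem sqrt_quadratic_div_quadratic_sub_isBigO {n₀ n₁ n₂ d₀ d₁ d₂ p₀ p₂ : ℝ}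
    (hp₀ : 0 < p₀) (hd₀ : d₀ ≠ 0) (h₀ : n₀ = p₀ ^ 2 * d₀) (h₁ : n₁ = p₀ ^ 2 * d₁)
    (h₂ : n₂ = p₀ ^ 2 * d₂ + 2 * p₀ * p₂ * d₀) :
    (fun a : ℝ =>
        √((n₀ + n₁ * a + n₂ * a ^ 2) / (d₀ + d₁ * a + d₂ * a ^ 2)) - p₀ - p₂ * a ^ 2)
      =O[𝓝 0] fun a => a ^ 3 := by
  set D : ℝ → ℝ := fun a => d₀ + d₁ * a + d₂ * a ^ 2
  set R : ℝ → ℝ := fun a => 2 * p₀ * p₂ * d₁ + (2 * p₀ * p₂ * d₂ + p₂ ^ 2 * d₀) * a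
    + p₂ ^ 2 * d₁ * a ^ 2 + p₂ ^ 2 * d₂ * a ^ 3
  have hD : Tendsto D (𝓝 0) (𝓝 d₀) := by
    simpa [D] using (by fun_prop : Continuous D).tendsto 0
  have hR : Tendsto R (𝓝 0) (𝓝 (R 0)) := (by fun_prop : Continuous R).tendsto 0
  have hp : Tendsto (fun a : ℝ => p₀ + p₂ * a ^ 2) (𝓝 0) (𝓝 p₀) := by
    simpa using (by fun_prop : Continuous fun a : ℝ => p₀ + p₂ * a ^ 2).tendsto 0
  have hnum (a : ℝ) :
      (n₀ + n₁ * a + n₂ * a ^ 2) - (p₀ + p₂ * a ^ 2) ^ 2 * D a = -(a ^ 3 * R a) := by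
    subst h₀ h₁ h₂; ring
  have hratio : (fun a => (n₀ + n₁ * a + n₂ * a ^ 2) / D a - (p₀ + p₂ * a ^ 2) ^ 2)
      =O[𝓝 0] fun a => a ^ 3 := by
    have hinv : (fun a => (D a)⁻¹) =O[𝓝 0] fun _ => (1 : ℝ) := (hD.inv₀ hd₀).isBigO_one ℝ
    have hcubic := (isBigO_refl (fun a : ℝ => a ^ 3) (𝓝 0)).mul (hR.isBigO_one ℝ)
    refine (hcubic.neg_left.mul hinv).congr' ?_ (by simp)
    filter_upwards [hD.eventually_ne hd₀] with a ha
    rw [← hnum a]; field_simp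
  simpa only [sub_sub] using hratio.sqrt_sub hp hp₀

theorem stmt_10_general (M Λ : ℝ) (hM : 0 < M) (hsub : 9 * Λ * M ^ 2 < 1) :
    (fun a : ℝ =>
        Real.sqrt (Nhat M Λ a / Dhat M Λ a) - S M Λ / (3 * Real.sqrt 3 * M) -
          (Real.sqrt 3 * (45 * Λ * M ^ 2 - 2) / (243 * M ^ 3 * S M Λ)) * a ^ 2)
      =O[nhds 0] fun a : ℝ => a ^ 3 := by
  have hS : 0 < S M Λ := Real.sqrt_pos.2 (by linarith)
  have h3 : Real.sqrt 3 ^ 2 = 3 := Real.sq_sqrt (by norm_num)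
  simp only [Nhat, Dhat, sub_eq_add_neg (_ / _), ← neg_mul]
  refine sqrt_quadratic_div_quadratic_sub_isBigO (by positivity) (by positivity) ?_ ?_ ?_
  all_goals field_simp; rw [h3]; ring

/-- with `Ω_ph = S/(3√3·M)` and `c_{λ,2} = √3·(45ΛM² - 2)/(243M³S)`,
one has `√(N̂(a)/D̂(a)) - Ω_ph - c_{λ,2}·a² = O(a³)` as `a → 0`. -/
theorem stmt_10 (M Λ : ℝ) (hM : 0 < M) (hΛ : 0 < Λ) (hsub : 9 * Λ * M ^ 2 < 1) :
    (fun a : ℝ =>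
        Real.sqrt (Nhat M Λ a / Dhat M Λ a) - S M Λ / (3 * Real.sqrt 3 * M) -
          (Real.sqrt 3 * (45 * Λ * M ^ 2 - 2) / (243 * M ^ 3 * S M Λ)) * a ^ 2)
      =O[nhds 0] fun a : ℝ => a ^ 3 :=
  stmt_10_general M Λ hM hsub
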